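/- Over the frame (ℕ,<), let α be a monotone hybrid formula in MHL(□,@) (built from atomic propositions, nominals, ⊤, ⊥, ∧, ∨, □, @ over nominals; no negation, no ◇, no ↓). Define an occurrence of a nominal in α to be 'bound by □' if it lies inside a subformula □β with no @-operator between that □ and the occurrence. Let α' be obtained from α by replacing every occurrence of a nominal that is bound by □ with ⊥. Then for every valuation η : NOM → ℕ and every k ∈ ℕ, if η,k ⊨ α then η,k ⊨ α'. -/

import Mathlib

/-- Formulas of monotone hybrid logic MHL(□,@) with atomic propositions and nominals. -/
inductive HForm : Type
  | prop : ℕ → HForm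
  | nom : ℕ → HForm
  | top : HForm
  | bot : HForm
  | conj : HForm → HForm → HForm
  | disj : HForm → HForm → HForm
  | box : HForm → HForm
  | at_ : ℕ → HForm → HForm

/-- Satisfaction over the frame (ℕ,<) with nominal valuation η. Atomic propositions
are evaluated by the true-everywhere convention. -/
def sat (η : ℕ → ℕ) (k : ℕ) : HForm → Prop
  | .prop _ => True
  | .nom i => η i = k
  | .top => True
  | .bot => False
  | .conj a b => sat η k a ∧ sat η k b
  | .disj a b => sat η k a ∨ sat η k b
  | .box a => ∀ k' > k, sat η k' a
  | .at_ i a => sat η (η i) a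

mutual
/-- α' : replace every occurrence of a nominal that is bound by □ (i.e. lies inside a
subformula □β with no @ between that □ and the occurrence) with ⊥. -/
def prime : HForm → HForm
  | .prop p => .prop p
  | .nom i => .nom i
  | .top => .top
  | .bot => .bot
  | .conj a b => .conj (prime a) (prime b)
  | .disj a b => .disj (prime a) (prime b)
  | .box a => .box (killNom a)
  | .at_ i a => .at_ i (prime a)

/-- Replace nominal occurrences that are under a □ with no shielding @ by ⊥. -/
def killNom : HForm → HForm
  | .prop p => .prop p
  | .nom _ => .bot
  | .top => .top
  | .bot => .bot
  | .conj a b => .conj (killNom a) (killNom b)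
  | .disj a b => .disj (killNom a) (killNom b)
  | .box a => .box (killNom a)
  | .at_ i a => .at_ i (prime a)
end

/-!
A nominal denotes a single state, so it fails at every sufficiently large state. Hence, for
large `m`, the truth of `a` at `m` implies that of `killNom a` at `m`: at large states the
occurrences of nominals not shielded by `@` are already false. Since `killNom a` contains no
such occurrences, its truth does not depend on the state at all. A box `□a` true at `k` makes
`a` true at all large states, so `killNom a` is true somewhere and hence everywhere, which is
what `prime (□a) = □(killNom a)` needs.
-/

open Filter

section

variable {η : ℕ → ℕ}

theorem eventually_not_sat_nom (i : ℕ) : ∀ᶠ m in atTop, ¬ sat η m (.nom i) :=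
  (eventually_gt_atTop (η i)).mono fun _ hm h => hm.ne h

theorem sat_killNom_iff (a : HForm) (m n : ℕ) :
    sat η m (killNom a) ↔ sat η n (killNom a) := by
  induction a generalizing m n with
  | conj a b iha ihb => exact and_congr (iha m n) (ihb m n)
  | disj a b iha ihb => exact or_congr (iha m n) (ihb m n)
  | box a ih =>
    have hconst : ∀ j, (∀ k' > j, sat η k' (killNom a)) ↔ sat η 0 (killNom a) := fun j =>
      ⟨fun h => (ih _ 0).1 (h (j + 1) j.lt_succ_self), fun h k' _ => (ih k' 0).2 h⟩
    exact (hconst m).trans (hconst n).symm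
  | _ => exact Iff.rfl

mutual

theorem sat_prime_of_sat : ∀ (a : HForm) {k : ℕ}, sat η k a → sat η k (prime a)
  | .prop _, _, h | .nom _, _, h | .top, _, h | .bot, _, h => h
  | .conj a b, _, h => ⟨sat_prime_of_sat a h.1, sat_prime_of_sat b h.2⟩
  | .disj a b, _, h => h.imp (sat_prime_of_sat a) (sat_prime_of_sat b)
  | .box a, k, h => by
    obtain ⟨m, hm⟩ :=
      ((eventually_sat_killNom_of_sat a).and (eventually_gt_atTop k)).exists
    exact fun k' _ => (sat_killNom_iff a m k').1 (hm.1 (h m hm.2))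
  | .at_ _ a, _, h => sat_prime_of_sat a h

theorem eventually_sat_killNom_of_sat :
    ∀ a : HForm, ∀ᶠ m in atTop, sat η m a → sat η m (killNom a)
  | .prop _ | .top | .bot => .of_forall fun _ => id
  | .nom i => (eventually_not_sat_nom i).mono fun _ hm h => (hm h).elim
  | .conj a b => (eventually_sat_killNom_of_sat a).and (eventually_sat_killNom_of_sat b)
      |>.mono fun _ hm h => ⟨hm.1 h.1, hm.2 h.2⟩
  | .disj a b => (eventually_sat_killNom_of_sat a).and (eventually_sat_killNom_of_sat b)
      |>.mono fun _ hm h => h.imp hm.1 hm.2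
  | .box a => by
    obtain ⟨N, hN⟩ := eventually_atTop.1 (eventually_sat_killNom_of_sat a)
    exact eventually_atTop.2 ⟨N, fun m hm h k' hk' => hN k' (by omega) (h k' hk')⟩
  | .at_ _ a => .of_forall fun _ => sat_prime_of_sat a

end

end

/-- If η,k ⊨ α then η,k ⊨ α', where α' replaces every nominal occurrence bound by □
with ⊥. -/
theorem stmt2 (α : HForm) (η : ℕ → ℕ) (k : ℕ) (h : sat η k α) : sat η k (prime α) :=
  sat_prime_of_sat α h
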